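/- Let k be an integer with k ≠ 0 and k ≠ 1, let h : ℝ → ℝ be twice differentiable with h(t) > 0 for all t, and let λ₀, c₀ ∈ ℝ. Then the pair of equations [for all t ∈ ℝ: k·(h''(t) − h'(t)) = −λ₀·h(t), and −λ₀·h(t)² − h''(t)·h(t) − (k−1)·h'(t)² + (2k−1)·h(t)·h'(t) − (k−1)·h(t)² = c₀] holds if and only if λ₀ = 0 and there exist constants c₁, c₂ ∈ ℝ such that h(t) = c₁·exp(t) + c₂ for all t ∈ ℝ and c₀ = −(k−1)·c₂². -/

import Mathlib

/-!
Eliminating `h''` with the first equation turns the second into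
`-(k - 1) * ((h' - h) ^ 2 + (λ / k) * h ^ 2) = c₀`, so `Q = (h' - h) ^ 2 + (λ / k) * h ^ 2` is
constant. Along solutions of `h'' = h' - (λ / k) h` one computes `Q' = 2 (λ / k) h ^ 2`, so `h > 0`
forces `λ = 0`. Then `h'' = h'`, hence `h' = c₁ eᵗ` and `h = c₁ eᵗ + c₂`, and evaluating the
second equation gives `c₀ = -(k - 1) c₂ ^ 2`.
-/

open Real

theorem eq_mul_exp_of_hasDerivAt_self {f : ℝ → ℝ} (hf : ∀ t, HasDerivAt f (f t) t) (t : ℝ) :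
    f t = f 0 * exp t := by
  have hg : ∀ s, HasDerivAt (fun s => exp (-s) * f s) 0 s := fun s =>
    ((hasDerivAt_neg s).exp.mul (hf s)).congr_deriv (by ring)
  have := is_const_of_deriv_eq_zero (fun s => (hg s).differentiableAt) (fun s => (hg s).deriv) t 0
  rw [neg_zero, exp_zero, one_mul, exp_neg] at this
  field_simp at this
  linarith

theorem exists_eq_mul_exp_add_const_of_deriv_deriv_eq_deriv {f : ℝ → ℝ} (hf : Differentiable ℝ f)
    (hf' : Differentiable ℝ (deriv f)) (hode : ∀ t, deriv (deriv f) t = deriv f t) :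
    ∃ c₁ c₂ : ℝ, ∀ t, f t = c₁ * exp t + c₂ := by
  have hexp : ∀ t, deriv f t = deriv f 0 * exp t :=
    eq_mul_exp_of_hasDerivAt_self fun t => hode t ▸ (hf' t).hasDerivAt
  have hg : ∀ s, HasDerivAt (fun s => f s - deriv f 0 * exp s) 0 s := fun s =>
    ((hf s).hasDerivAt.sub ((hasDerivAt_exp s).const_mul (deriv f 0))).congr_deriv
      (by rw [hexp s, sub_self])
  refine ⟨deriv f 0, f 0 - deriv f 0, fun t => ?_⟩
  have := is_const_of_deriv_eq_zero (fun s => (hg s).differentiableAt) (fun s => (hg s).deriv) t 0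
  rw [exp_zero] at this
  linarith

theorem deriv_eq_mul_exp {f : ℝ → ℝ} {c₁ c₂ : ℝ} (hf : ∀ t, f t = c₁ * exp t + c₂) :
    deriv f = fun t => c₁ * exp t := by
  rw [funext hf]
  ext t
  exact (((hasDerivAt_exp t).const_mul c₁).add_const c₂).deriv

theorem deriv_deriv_eq_mul_exp {f : ℝ → ℝ} {c₁ c₂ : ℝ} (hf : ∀ t, f t = c₁ * exp t + c₂) :
    deriv (deriv f) = fun t => c₁ * exp t :=
  deriv_eq_mul_exp (c₂ := 0) fun t => by rw [deriv_eq_mul_exp hf, add_zero]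

theorem hasDerivAt_sq_deriv_sub_add_mul_sq {f : ℝ → ℝ} {a : ℝ} (hf : Differentiable ℝ f)
    (hf' : Differentiable ℝ (deriv f)) (hode : ∀ t, deriv (deriv f) t = deriv f t - a * f t)
    (t : ℝ) :
    HasDerivAt (fun s => (deriv f s - f s) ^ 2 + a * f s ^ 2) (2 * a * f t ^ 2) t := by
  have h₁ := (hf t).hasDerivAt
  have h₂ := (hf' t).hasDerivAt
  rw [hode] at h₂
  exact (((h₂.sub h₁).pow 2).add ((h₁.pow 2).const_mul a)).congr_deriv
    (by simp only [Pi.sub_apply]; ring)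

theorem eq_zero_of_sq_deriv_sub_add_mul_sq_eq_const {f : ℝ → ℝ} {a C t₀ : ℝ}
    (hf : Differentiable ℝ f) (hf' : Differentiable ℝ (deriv f))
    (hode : ∀ t, deriv (deriv f) t = deriv f t - a * f t)
    (hC : ∀ t, (deriv f t - f t) ^ 2 + a * f t ^ 2 = C) (ht₀ : f t₀ ≠ 0) : a = 0 := by
  have hQ := hasDerivAt_sq_deriv_sub_add_mul_sq hf hf' hode t₀
  rw [funext hC] at hQ
  have : 2 * a * f t₀ ^ 2 = 0 := hQ.unique (hasDerivAt_const t₀ C)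
  simpa [ht₀] using this

theorem einstein_lhs_eq_of_mul_sub_eq {K lam x y z : ℝ} (hK : K ≠ 0)
    (hfirst : K * (z - y) = -lam * x) :
    -lam * x ^ 2 - z * x - (K - 1) * y ^ 2 + (2 * K - 1) * x * y - (K - 1) * x ^ 2 =
      -(K - 1) * ((y - x) ^ 2 + lam / K * x ^ 2) := by
  have hz : z = y - lam / K * x := by field_simp; linear_combination hfirst
  subst hz
  field_simp
  ring

/-- For an integer k ∉ {0,1}, h > 0 twice differentiable, the system
[k(h'' − h') = −λ₀ h and −λ₀ h² − h'' h − (k−1)(h')² + (2k−1)h h' − (k−1)h² = c₀]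
holds iff λ₀ = 0 and there are c₁, c₂ with h(t) = c₁ exp(t) + c₂ and c₀ = −(k−1)c₂². -/
theorem superWarped_einstein_iff_general_k
    (k : ℤ) (hk0 : k ≠ 0) (hk1 : k ≠ 1)
    (h : ℝ → ℝ) (hpos : ∀ t : ℝ, 0 < h t)
    (hd1 : Differentiable ℝ h) (hd2 : Differentiable ℝ (deriv h))
    (lam c₀ : ℝ) :
    ((∀ t : ℝ, (k : ℝ) * (deriv (deriv h) t - deriv h t) = -lam * h t) ∧
      (∀ t : ℝ, -lam * h t ^ 2 - deriv (deriv h) t * h t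
        - ((k : ℝ) - 1) * deriv h t ^ 2 + (2 * (k : ℝ) - 1) * h t * deriv h t
        - ((k : ℝ) - 1) * h t ^ 2 = c₀)) ↔
      (lam = 0 ∧ ∃ c₁ c₂ : ℝ, (∀ t : ℝ, h t = c₁ * Real.exp t + c₂) ∧
        c₀ = -((k : ℝ) - 1) * c₂ ^ 2) := by
  constructor
  · rintro ⟨hfirst, hein⟩
    have hK : (k : ℝ) ≠ 0 := by exact_mod_cast hk0
    have hK1 : (k : ℝ) - 1 ≠ 0 := sub_ne_zero.mpr (by exact_mod_cast hk1)
    have hode : ∀ t, deriv (deriv h) t = deriv h t - lam / k * h t := fun t => by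
      field_simp
      linear_combination hfirst t
    have hQ : ∀ t, (deriv h t - h t) ^ 2 + lam / k * h t ^ 2 = -c₀ / (k - 1) := fun t => by
      rw [eq_div_iff hK1, ← hein t, einstein_lhs_eq_of_mul_sub_eq hK (hfirst t)]
      ring
    have hlam : lam = 0 := by
      simpa [hK] using eq_zero_of_sq_deriv_sub_add_mul_sq_eq_const hd1 hd2 hode hQ (hpos 0).ne'
    obtain ⟨c₁, c₂, hh⟩ :=
      exists_eq_mul_exp_add_const_of_deriv_deriv_eq_deriv hd1 hd2 (by simpa [hlam] using hode)
    refine ⟨hlam, c₁, c₂, hh, ?_⟩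
    rw [← hein 0, deriv_deriv_eq_mul_exp hh, deriv_eq_mul_exp hh, hh, hlam]
    ring
  · rintro ⟨rfl, c₁, c₂, hh, rfl⟩
    simp only [deriv_deriv_eq_mul_exp hh]
    simp only [deriv_eq_mul_exp hh, hh]
    constructor <;> intro t <;> ring
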